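/- Let p₁, p₂, β be real numbers with 0 < p₁ < p₂ < 1, β ≠ 0 and β ≠ −1. Then there exists a nonzero symmetric 2×2 real matrix M with M * V = Vᵀ * M for each of the three matrices V₁ = !![−p₁, p₁; β, 1], V₂ = !![p₁ − p₂ + p₁β, p₂; β, 1], V₃ = !![p₂ − 1 + p₂β, 1; β, 1] if and only if p₁² + p₂² − p₁p₂ − p₁ = 0. (Theorem 3 for type [1,−1,1]: the jump transformation S has a natural dual exactly when p₁² + p₂² − p₁p₂ − p₁ = 0.) -/
import Mathlib


open Matrix

lemma transpose_fin_two_lit (a b c d : ℝ) :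
    (!![a, b; c, d] : Matrix (Fin 2) (Fin 2) ℝ)ᵀ = !![a, c; b, d] := by
  ext i j; fin_cases i <;> fin_cases j <;> rfl

/-- Theorem 3 for type `[1,−1,1]`: for a general partition `0 < p₁ < p₂ < 1`
the jump transformation `S` has a natural dual (a nonzero symmetric matrix
intertwining each inverse-branch matrix with its transpose) if and only if
`p₁² + p₂² − p₁p₂ − p₁ = 0`. -/
theorem natural_dual_iff_type_one_negone_one (p₁ p₂ β : ℝ)
    (hp₁ : 0 < p₁) (hp₁₂ : p₁ < p₂) (hp₂ : p₂ < 1)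
    (hβ0 : β ≠ 0) (hβ1 : β ≠ -1) :
    (∃ M : Matrix (Fin 2) (Fin 2) ℝ, M ≠ 0 ∧ M.IsSymm ∧
      M * !![-p₁, p₁; β, 1] = (!![-p₁, p₁; β, 1] : Matrix (Fin 2) (Fin 2) ℝ)ᵀ * M ∧
      M * !![p₁ - p₂ + p₁*β, p₂; β, 1] = (!![p₁ - p₂ + p₁*β, p₂; β, 1] : Matrix (Fin 2) (Fin 2) ℝ)ᵀ * M ∧
      M * !![p₂ - 1 + p₂*β, 1; β, 1] = (!![p₂ - 1 + p₂*β, 1; β, 1] : Matrix (Fin 2) (Fin 2) ℝ)ᵀ * M) ↔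
    p₁^2 + p₂^2 - p₁*p₂ - p₁ = 0 := by
  have hβ1' : 1 + β ≠ 0 := by intro h; apply hβ1; linarith
  constructor
  · rintro ⟨M, hM0, hMs, h1, h2, h3⟩
    rw [transpose_fin_two_lit] at h1 h2 h3
    have hsym : M 1 0 = M 0 1 := hMs.apply 0 1
    have e1 := congrFun (congrFun h1 0) 1
    have e2 := congrFun (congrFun h2 0) 1
    have e3 := congrFun (congrFun h3 0) 1
    simp [Matrix.mul_apply, Fin.sum_univ_two] at e1 e2 e3
    have E1 : p₁ * M 0 0 + (1 + p₁) * M 0 1 - β * M 1 1 = 0 := by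
      linear_combination e1
    have E2 : p₂ * M 0 0 + (1 - p₁ + p₂ - p₁*β) * M 0 1 - β * M 1 1 = 0 := by
      linear_combination e2
    have E3 : M 0 0 + (2 - p₂ - p₂*β) * M 0 1 - β * M 1 1 = 0 := by
      linear_combination e3
    have R1 : (p₁ - 1) * M 0 0 + (p₁ + p₂ - 1 + p₂*β) * M 0 1 = 0 := by
      linear_combination E1 - E3
    have R2 : (p₂ - 1) * M 0 0 + (-p₁ + 2*p₂ - 1 + (p₂ - p₁)*β) * M 0 1 = 0 := by
      linear_combination E2 - E3
    by_cases hy0 : M 0 1 = 0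
    · exfalso
      have hx0 : M 0 0 = 0 := by
        have h' : (p₁ - 1) * M 0 0 = 0 := by rw [hy0] at R1; linarith
        rcases mul_eq_zero.mp h' with h | h
        · exact absurd h (by intro h; linarith)
        · exact h
      have hz0 : M 1 1 = 0 := by
        have h' : β * M 1 1 = 0 := by rw [hy0, hx0] at E1; linarith
        rcases mul_eq_zero.mp h' with h | h
        · exact absurd h hβ0
        · exact h
      apply hM0
      ext i j
      fin_cases i <;> fin_cases j <;> simp only [Matrix.zero_apply] <;>
        first
        | exact hx0
        | exact hy0
        | exact hsym.trans hy0
        | exact hz0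
    · have key : (1 + β) * (p₁^2 + p₂^2 - p₁*p₂ - p₁) * M 0 1 = 0 := by
        linear_combination (p₂ - 1) * R1 - (p₁ - 1) * R2
      rcases mul_eq_zero.mp key with h | h
      · rcases mul_eq_zero.mp h with h' | h'
        · exact absurd h' hβ1'
        · exact h'
      · exact absurd h hy0
  · intro hQ
    refine ⟨!![p₁ + p₂ - 1 + p₂*β, 1 - p₁;
               1 - p₁, ((p₁ + p₂ - 1 + p₂*β) + (2 - p₂ - p₂*β) * (1 - p₁))/β],
        ?_, ?_, ?_, ?_, ?_⟩
    · intro h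
      have h' : (1 : ℝ) - p₁ = 0 := by
        have := congrFun (congrFun h 0) 1
        simpa using this
      linarith
    · unfold Matrix.IsSymm
      ext i j
      fin_cases i <;> fin_cases j <;> rfl
    · rw [transpose_fin_two_lit]
      ext i j
      fin_cases i <;> fin_cases j
      all_goals try simp [Matrix.mul_apply, Fin.sum_univ_two]
      all_goals try field_simp
      all_goals try ring
      all_goals try linear_combination (1 + β) * hQ
      all_goals linear_combination (-(1 + β)) * hQ
    · rw [transpose_fin_two_lit]
      ext i j
      fin_cases i <;> fin_cases j
      all_goals try simp [Matrix.mul_apply, Fin.sum_univ_two]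
      all_goals try field_simp
      all_goals try ring
      all_goals try linear_combination (1 + β) * hQ
      all_goals linear_combination (-(1 + β)) * hQ
    · rw [transpose_fin_two_lit]
      ext i j
      fin_cases i <;> fin_cases j
      all_goals try simp [Matrix.mul_apply, Fin.sum_univ_two]
      all_goals try field_simp
      all_goals try ring
      all_goals try linear_combination (1 + β) * hQ
      all_goals linear_combination (-(1 + β)) * hQ
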